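/- arXiv:2009.10439 — 5 statements merged into one kernel-verified Lean document; each statement's English description precedes it below -/
import Mathlib

section
/- The number of permutations in S_n that avoid the pattern 231 equals the Catalan number C_n = (1/(n+1)) * binom(2n, n). -/
def Contains231 (l : List ℕ) : Prop :=
  ∃ i1 i2 i3 : ℕ, i1 < i2 ∧ i2 < i3 ∧ i3 < l.length ∧
    l.getD i3 0 < l.getD i1 0 ∧ l.getD i1 0 < l.getD i2 0

/-!
If the largest entry `m` of a 231-avoiding permutation splits it as `s ++ m :: t`, then every
entry of `s` is smaller than every entry of `t`, since a larger `a ∈ s` and smaller `c ∈ t`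
would form the pattern `a m c`. Hence `s` is a 231-avoiding permutation of the `k` smallest
values and `t` one of the others, and conversely every such concatenation avoids 231. This is
the Catalan recursion `C (n + 1) = ∑ k, C k * C (n - k)`.
-/

open List

theorem contains231_iff_exists_sublist {l : List ℕ} :
    Contains231 l ↔ ∃ a b c, [a, b, c] <+ l ∧ c < a ∧ a < b := by
  constructor
  · rintro ⟨i, j, k, hij, hjk, hk, hki, hij'⟩
    have hi : i < l.length := by omega
    have hj : j < l.length := by omega
    rw [getD_eq_getElem _ _ hi, getD_eq_getElem _ _ hj, getD_eq_getElem _ _ hk] at *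
    refine ⟨l[i], l[j], l[k], ?_, hki, hij'⟩
    simpa using map_getElem_sublist (l := l) (is := [⟨i, hi⟩, ⟨j, hj⟩, ⟨k, hk⟩])
      (by simp; omega)
  · rintro ⟨a, b, c, hsub, hca, hab⟩
    obtain ⟨is, his, hlt⟩ := sublist_eq_map_getElem hsub
    rcases is with _ | ⟨i, _ | ⟨j, _ | ⟨k, _ | _⟩⟩⟩ <;> simp at his
    obtain ⟨rfl, rfl, rfl⟩ := his
    simp at hlt
    refine ⟨i, j, k, by omega, by omega, k.2, ?_, ?_⟩ <;> simpa [getD_eq_getElem]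

theorem not_contains231_append_cons_iff {s t : List ℕ} {m : ℕ} (hs : ∀ a ∈ s, a < m)
    (ht : ∀ b ∈ t, b < m) :
    ¬ Contains231 (s ++ m :: t) ↔
      ¬ Contains231 s ∧ ¬ Contains231 t ∧ ∀ a ∈ s, ∀ b ∈ t, a ≤ b := by
  simp only [contains231_iff_exists_sublist, not_exists, not_and, not_lt]
  constructor
  · intro h
    refine ⟨fun a b c hsub => h a b c (hsub.trans (sublist_append_left _ _)),
      fun a b c hsub => h a b c
        (hsub.trans ((sublist_cons_self _ _).trans (sublist_append_right _ _))),
      fun a ha b hb => ?_⟩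
    by_contra! hba
    have hamb : [a, m, b] <+ s ++ m :: t :=
      (singleton_sublist.2 ha).append (cons_sublist_cons.2 (singleton_sublist.2 hb))
    exact (h a m b hamb hba).not_gt (hs a ha)
  · rintro ⟨hns, hnt, hst⟩ a b c hsub hca
    obtain ⟨l₁, l₂, hl, h₁, h₂⟩ := sublist_append_iff.1 hsub
    have hcross : a ∈ s → c ∈ m :: t → False := fun ha hc => by
      rcases mem_cons.1 hc with rfl | hc
      · exact (hs a ha).not_gt hca
      · exact (hst a ha c hc).not_gt hca
    rcases l₁ with _ | ⟨x, _ | ⟨y, _ | ⟨z, _ | _⟩⟩⟩ <;> simp at hl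
    · subst hl
      rcases sublist_cons_iff.1 h₂ with h | ⟨r, hr, h⟩
      · exact hnt a b c h hca
      · obtain ⟨rfl, rfl⟩ := cons_eq_cons.1 hr
        exact (ht b (h.subset (mem_cons_self ..))).le
    · obtain ⟨rfl, rfl⟩ := hl
      exact (hcross (h₁.subset (mem_singleton_self _)) (h₂.subset (by simp))).elim
    · obtain ⟨rfl, rfl, rfl⟩ := hl
      exact (hcross (h₁.subset (by simp)) (h₂.subset (by simp))).elim
    · obtain ⟨rfl, rfl, rfl, rfl⟩ := hl
      exact hns a b c h₁ hca

theorem perm_take_and_perm_drop_of_append_perm {α : Type*} [LinearOrder α] {l s t : List α}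
    (hl : l.Pairwise (· ≤ ·)) (h : s ++ t ~ l) (hst : ∀ a ∈ s, ∀ b ∈ t, a ≤ b) :
    s ~ l.take s.length ∧ t ~ l.drop s.length := by
  -- sorting `s` and `t` separately already sorts `s ++ t`, so the result is `l` itself
  set s' := s.mergeSort (fun a b => decide (a ≤ b))
  set t' := t.mergeSort (fun a b => decide (a ≤ b))
  have hs' : s' ~ s := mergeSort_perm _ _
  have ht' : t' ~ t := mergeSort_perm _ _
  have hsorted : (s' ++ t').Pairwise (· ≤ ·) :=
    pairwise_append.2 ⟨pairwise_mergeSort' _ _, pairwise_mergeSort' _ _,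
      fun a ha b hb => hst a (hs'.subset ha) b (ht'.subset hb)⟩
  have hl' : s' ++ t' = l := ((hs'.append ht').trans h).eq_of_pairwise' hsorted hl
  rw [← hl', ← hs'.length_eq, take_left, drop_left]
  exact ⟨hs'.symm, ht'.symm⟩

open Classical in
noncomputable def avoiders231 (l : List ℕ) : Finset (List ℕ) :=
  l.permutations.toFinset.filter fun π => ¬ Contains231 π

theorem mem_avoiders231 {l π : List ℕ} :
    π ∈ avoiders231 l ↔ π ~ l ∧ ¬ Contains231 π := by
  simp [avoiders231, mem_permutations]

theorem avoiders231_nil : avoiders231 [] = {[]} := by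
  ext π
  simp only [mem_avoiders231, perm_nil, Finset.mem_singleton, and_iff_left_iff_imp]
  rintro rfl ⟨_, _, _, _, _, h, _⟩
  simp at h

section Decomposition

variable {l : List ℕ} {m : ℕ}

theorem append_cons_mem_avoiders231 (hl : l.Pairwise (· < ·)) (hm : ∀ x ∈ l, x < m) {k : ℕ}
    {s t : List ℕ} (hs : s ∈ avoiders231 (l.take k)) (ht : t ∈ avoiders231 (l.drop k)) :
    s ++ m :: t ∈ avoiders231 (l ++ [m]) := by
  rw [mem_avoiders231] at *
  have hperm : s ++ t ~ l := (hs.1.append ht.1).trans (Perm.of_eq (take_append_drop k l))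
  refine ⟨perm_middle.trans ((hperm.cons m).trans (perm_append_singleton m l).symm), ?_⟩
  refine (not_contains231_append_cons_iff (fun a ha => hm a ?_) (fun b hb => hm b ?_)).2
    ⟨hs.2, ht.2, fun a ha b hb => (hl.rel_of_mem_take_of_mem_drop
      (hs.1.subset ha) (ht.1.subset hb)).le⟩
  · exact take_subset k l (hs.1.subset ha)
  · exact drop_subset k l (ht.1.subset hb)

theorem exists_append_cons_of_mem_avoiders231 (hl : l.Pairwise (· < ·)) (hm : ∀ x ∈ l, x < m)
    {π : List ℕ} (hπ : π ∈ avoiders231 (l ++ [m])) :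
    ∃ s t, π = s ++ m :: t ∧ s ∈ avoiders231 (l.take s.length) ∧
      t ∈ avoiders231 (l.drop s.length) := by
  rw [mem_avoiders231] at hπ
  obtain ⟨s, t, rfl⟩ :=
    append_of_mem (hπ.1.symm.subset (mem_append_right l (mem_singleton_self m)))
  have hperm : s ++ t ~ l :=
    (perm_middle.symm.trans (hπ.1.trans (perm_append_singleton m l))).cons_inv
  obtain ⟨hs, ht, hst⟩ := (not_contains231_append_cons_iff
    (fun a ha => hm a (hperm.subset (mem_append_left t ha)))
    (fun b hb => hm b (hperm.subset (mem_append_right s hb)))).1 hπ.2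
  obtain ⟨hs', ht'⟩ := perm_take_and_perm_drop_of_append_perm (hl.imp le_of_lt) hperm hst
  exact ⟨s, t, rfl, mem_avoiders231.2 ⟨hs', hs⟩, mem_avoiders231.2 ⟨ht', ht⟩⟩

theorem card_avoiders231_append_singleton (hl : l.Pairwise (· < ·)) (hm : ∀ x ∈ l, x < m) :
    (avoiders231 (l ++ [m])).card = ∑ k ∈ Finset.range (l.length + 1),
      (avoiders231 (l.take k)).card * (avoiders231 (l.drop k)).card := by
  simp only [← Finset.card_product, ← Finset.card_sigma]
  symm
  refine Finset.card_bij (fun q _ => q.2.1 ++ m :: q.2.2) ?_ ?_ ?_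
  · rintro ⟨k, s, t⟩ hq
    obtain ⟨-, hq⟩ := Finset.mem_sigma.1 hq
    obtain ⟨hs, ht⟩ := Finset.mem_product.1 hq
    exact append_cons_mem_avoiders231 hl hm hs ht
  · rintro ⟨k, s, t⟩ hq ⟨k', s', t'⟩ hq' heq
    obtain ⟨hk, hq⟩ := Finset.mem_sigma.1 hq
    obtain ⟨hk', hq'⟩ := Finset.mem_sigma.1 hq'
    obtain ⟨hs, ht⟩ := Finset.mem_product.1 hq
    obtain ⟨hs', -⟩ := Finset.mem_product.1 hq'
    have hlen : ∀ {j u}, j ∈ Finset.range (l.length + 1) → u ∈ avoiders231 (l.take j) →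
        u.length = j := fun hj hu => by
      simpa [Nat.lt_succ_iff.1 (Finset.mem_range.1 hj)] using (mem_avoiders231.1 hu).1.length_eq
    have hnotin : ∀ {u : List ℕ}, u ⊆ l → m ∉ u := fun hu hmu => (hm m (hu hmu)).false
    obtain ⟨rfl, -, rfl⟩ := (append_cons_inj_of_notMem
      (hnotin fun _ hx => take_subset k l ((mem_avoiders231.1 hs).1.subset hx))
      (hnotin fun _ hx => drop_subset k l ((mem_avoiders231.1 ht).1.subset hx))).1 heq
    obtain rfl : k = k' := (hlen hk hs).symm.trans (hlen hk' hs')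
    rfl
  · intro π hπ
    obtain ⟨s, t, rfl, hs, ht⟩ := exists_append_cons_of_mem_avoiders231 hl hm hπ
    have hlen : s.length ≤ l.length := by simpa using (mem_avoiders231.1 hs).1.length_eq.le
    exact ⟨⟨s.length, s, t⟩, Finset.mem_sigma.2
      ⟨Finset.mem_range.2 (Nat.lt_succ_of_le hlen), Finset.mem_product.2 ⟨hs, ht⟩⟩, rfl⟩

end Decomposition

theorem card_avoiders231_eq_catalan {l : List ℕ} (hl : l.Pairwise (· < ·)) :
    (avoiders231 l).card = catalan l.length := by
  induction hn : l.length using Nat.strong_induction_on generalizing l with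
  | _ n ih =>
  rcases eq_nil_or_concat' l with rfl | ⟨l, m, rfl⟩
  · subst hn
    simp [avoiders231_nil]
  obtain ⟨hl, -, hm⟩ := pairwise_append.1 hl
  obtain rfl : n = l.length + 1 := by simp [← hn]
  rw [card_avoiders231_append_singleton hl (fun x hx => hm x hx m (mem_singleton_self m)),
    catalan_succ, Fin.sum_univ_eq_sum_range (fun i => catalan i * catalan (l.length - i))]
  refine Finset.sum_congr rfl fun k hk => ?_
  have hk : k ≤ l.length := Nat.lt_succ_iff.1 (Finset.mem_range.1 hk)
  rw [ih k (by omega) (hl.sublist (take_sublist k l)) (by simp [hk]),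
    ih _ (by omega) (hl.sublist (drop_sublist k l)) (length_drop ..)]

/-- The number of permutations in `S_n` avoiding the pattern 231 equals the
Catalan number `C_n = binom(2n, n)/(n+1)`. -/
theorem stmt1 (n : ℕ) :
    (n + 1) * Nat.card {π : List ℕ // List.Perm π (List.range' 1 n) ∧ ¬ Contains231 π}
      = Nat.choose (2 * n) n := by
  have hcard : Nat.card {π : List ℕ // π ~ range' 1 n ∧ ¬ Contains231 π} =
      (avoiders231 (range' 1 n)).card := by
    rw [← Nat.card_eq_finsetCard]
    exact Nat.card_congr (Equiv.subtypeEquivRight fun π => mem_avoiders231.symm)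
  rw [hcard, card_avoiders231_eq_catalan (pairwise_lt_range' 1), length_range',
    succ_mul_catalan_eq_centralBinom, Nat.centralBinom_eq_two_mul_choose]
end

section
/- Let w_n denote the number of 3-stack-sortable permutations in S_n. Then for all n ≥ 2, w_n ≤ n · w_{n-1}. -/
/-- The stack-sorting map, implemented with a fuel parameter (fuel `l.length`
always suffices since the maximum entry is removed at each level). -/
def stackSortAux : ℕ → List ℕ → List ℕ
  | 0, _ => []
  | _ + 1, [] => []
  | fuel + 1, l =>
      let m := l.foldr max 0
      stackSortAux fuel (l.takeWhile (fun x => x != m)) ++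
        stackSortAux fuel ((l.dropWhile (fun x => x != m)).tail) ++ [m]

/-- The stack-sorting map `s`: `s(LmR) = s(L) s(R) m` where `m` is the largest entry. -/
def stackSort (l : List ℕ) : List ℕ := stackSortAux l.length l

/-- `w n`: the number of 3-stack-sortable permutations in `S_n`. -/
noncomputable def w (n : ℕ) : ℕ :=
  Nat.card {π : List ℕ //
    List.Perm π (List.range' 1 n) ∧ stackSort^[3] π = List.range' 1 n}

/-!
Deleting the entry `1` and lowering the other entries by one commutes with the stack-sorting map:
lowering is order-preserving, and `1` is never the maximum of a block with at least two entries, so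
it is simply deleted inside the recursive call on the block that contains it. Hence this operation
maps `t`-stack-sortable permutations of size `n + 1` to `t`-stack-sortable permutations of size `n`,
and a permutation is recovered from its image together with the position of `1`.
-/

theorem foldr_max_append_cons {A B : List ℕ} {m : ℕ} (hA : ∀ x ∈ A, x < m)
    (hB : ∀ x ∈ B, x ≤ m) : (A ++ m :: B).foldr max 0 = m := by
  induction A with
  | nil =>
    have hBm : B.foldr max 0 ≤ m := by induction B <;> simp_all
    simpa using hBm
  | cons a A ih => simp_all [le_of_lt]

theorem stackSortAux_append_cons (fuel : ℕ) {A B : List ℕ} {m : ℕ} (hA : ∀ x ∈ A, x < m)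
    (hB : ∀ x ∈ B, x ≤ m) :
    stackSortAux (fuel + 1) (A ++ m :: B) = stackSortAux fuel A ++ stackSortAux fuel B ++ [m] := by
  have hA' : ∀ x ∈ A, (x != m) = true := fun x hx => by simpa using (hA x hx).ne
  rw [stackSortAux.eq_3 _ _ (by simp), foldr_max_append_cons hA hB,
    List.takeWhile_append_of_pos hA', List.dropWhile_append_of_pos hA']
  simp

theorem exists_eq_append_cons_max {l : List ℕ} (hl : l ≠ []) :
    ∃ A m B, l = A ++ m :: B ∧ (∀ x ∈ A, x < m) ∧ ∀ x ∈ B, x ≤ m := by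
  obtain ⟨m, hm, hmax⟩ := l.toFinset.exists_max_image id (by simpa using hl)
  simp only [List.mem_toFinset, id] at hm hmax
  have hdrop : l.dropWhile (· < m) ≠ [] := by
    simpa [List.dropWhile_eq_nil_iff] using ⟨m, hm, le_rfl⟩
  obtain ⟨m', B, hmB⟩ := List.exists_cons_of_ne_nil hdrop
  have hsub : m' :: B ⊆ l := hmB ▸ (List.dropWhile_sublist _).subset
  have hm' : ¬ m' < m := by
    have := List.head_dropWhile_not (fun x => decide (x < m)) hdrop
    simp_all
  obtain rfl : m = m' := (le_antisymm (hmax m' (hsub (by simp))) (not_lt.1 hm')).symm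
  refine ⟨l.takeWhile (· < m), m, B, ?_, fun x hx => by simpa using List.mem_takeWhile_imp hx,
    fun x hx => hmax x (hsub (by simp [hx]))⟩
  rw [← hmB, List.takeWhile_append_dropWhile]

@[elab_as_elim]
theorem stackSort_induction {P : List ℕ → Prop} (nil : P [])
    (append_cons : ∀ A m B, (∀ x ∈ A, x < m) → (∀ x ∈ B, x ≤ m) → P A → P B → P (A ++ m :: B))
    (l : List ℕ) : P l := by
  induction hn : l.length using Nat.strong_induction_on generalizing l with
  | _ n ih =>
    obtain rfl | hl := eq_or_ne l []
    · exact nil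
    obtain ⟨A, m, B, rfl, hA, hB⟩ := exists_eq_append_cons_max hl
    have hlen : (A ++ m :: B).length = A.length + B.length + 1 := by simp; omega
    exact append_cons A m B hA hB (ih _ (by omega) A rfl) (ih _ (by omega) B rfl)

theorem stackSortAux_eq_stackSort {fuel : ℕ} {l : List ℕ} (h : l.length ≤ fuel) :
    stackSortAux fuel l = stackSort l := by
  induction l using stackSort_induction generalizing fuel with
  | nil => cases fuel <;> rfl
  | append_cons A m B hA hB ihA ihB =>
    have hlen : (A ++ m :: B).length = A.length + B.length + 1 := by simp; omega
    obtain ⟨f, rfl⟩ : ∃ f, fuel = f + 1 := ⟨fuel - 1, by omega⟩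
    rw [stackSort, hlen, stackSortAux_append_cons _ hA hB, stackSortAux_append_cons _ hA hB,
      ihA (by omega), ihA (by omega), ihB (by omega), ihB (by omega)]

theorem stackSort_append_cons {A B : List ℕ} {m : ℕ} (hA : ∀ x ∈ A, x < m)
    (hB : ∀ x ∈ B, x ≤ m) : stackSort (A ++ m :: B) = stackSort A ++ stackSort B ++ [m] := by
  rw [← stackSortAux_eq_stackSort (fuel := A.length + B.length + 1) (by simp; omega),
    stackSortAux_append_cons _ hA hB, stackSortAux_eq_stackSort (by omega),
    stackSortAux_eq_stackSort (by omega)]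

theorem stackSort_perm (l : List ℕ) : (stackSort l).Perm l := by
  induction l using stackSort_induction with
  | nil => rfl
  | append_cons A m B hA hB ihA ihB =>
    rw [stackSort_append_cons hA hB]
    have hmid : (A ++ B ++ [m]).Perm (A ++ m :: B) := by
      simpa using (List.perm_append_singleton m B).append_left A
    exact ((ihA.append ihB).append_right _).trans hmid

theorem stackSort_iterate_perm (t : ℕ) (l : List ℕ) : (stackSort^[t] l).Perm l := by
  induction t with
  | zero => rfl
  | succ t ih =>
    rw [Function.iterate_succ_apply']
    exact (stackSort_perm _).trans ih

theorem stackSort_map {f : ℕ → ℕ} {l : List ℕ} (hf : StrictMonoOn f {x | x ∈ l}) :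
    stackSort (l.map f) = (stackSort l).map f := by
  induction l using stackSort_induction with
  | nil => rfl
  | append_cons A m B hA hB ihA ihB =>
    have hm : m ∈ A ++ m :: B := by simp
    have hfA : ∀ y ∈ A.map f, y < f m := by
      simp only [List.mem_map, forall_exists_index, and_imp, forall_apply_eq_imp_iff₂]
      exact fun x hx => hf (by simp [hx]) hm (hA x hx)
    have hfB : ∀ y ∈ B.map f, y ≤ f m := by
      simp only [List.mem_map, forall_exists_index, and_imp, forall_apply_eq_imp_iff₂]
      exact fun x hx => (hf.le_iff_le (by simp [hx]) hm).2 (hB x hx)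
    rw [List.map_append, List.map_cons, stackSort_append_cons hfA hfB, stackSort_append_cons hA hB,
      ihA (hf.mono fun _ hx => List.mem_append_left _ hx),
      ihB (hf.mono fun _ hx => List.mem_append_right _ (List.mem_cons_of_mem _ hx))]
    simp

theorem stackSort_erase_of_forall_le {l : List ℕ} {a : ℕ} (hl : l.Nodup) (ha : ∀ x ∈ l, a ≤ x) :
    stackSort (l.erase a) = (stackSort l).erase a := by
  induction l using stackSort_induction with
  | nil => rfl
  | append_cons A m B hA hB ihA ihB =>
    have hndA : A.Nodup := hl.sublist (by simp)
    have hndB : B.Nodup := hl.sublist (by simp)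
    rw [stackSort_append_cons hA hB]
    by_cases haA : a ∈ A
    · rw [List.erase_append_left _ haA,
        stackSort_append_cons (fun x hx => hA x (List.mem_of_mem_erase hx)) hB, ihA hndA (fun x hx => ha x (by simp [hx])), List.append_assoc, List.append_assoc,
        List.erase_append_left _ ((stackSort_perm A).mem_iff.2 haA)]
    by_cases ham : a = m
    · subst ham
      obtain rfl : A = [] := List.eq_nil_iff_forall_not_mem.2 fun x hx =>
        (hA x hx).not_ge (ha x (by simp [hx]))
      obtain rfl : B = [] := List.eq_nil_iff_forall_not_mem.2 fun x hx => by
        obtain rfl := le_antisymm (hB x hx) (ha x (by simp [hx]))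
        simp_all
      simp [stackSort, stackSortAux]
    · rw [List.erase_append_right _ haA, List.erase_cons_tail (by simpa using Ne.symm ham),
        stackSort_append_cons hA (fun x hx => hB x (List.mem_of_mem_erase hx)),
        ihB hndB (fun x hx => ha x (by simp [hx])), List.append_assoc, List.append_assoc,
        List.erase_append_right _ ((stackSort_perm A).mem_iff.not.2 haA)]
      by_cases haB : a ∈ B
      · rw [List.erase_append_left _ ((stackSort_perm B).mem_iff.2 haB)]
      · have haB' : a ∉ stackSort B := (stackSort_perm B).mem_iff.not.2 haB
        simp [List.erase_of_not_mem, haB', ham]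

def removeOne (l : List ℕ) : List ℕ := (l.erase 1).map (· - 1)

theorem stackSort_removeOne {l : List ℕ} (hl : l.Nodup) (hpos : ∀ x ∈ l, 0 < x) :
    stackSort (removeOne l) = removeOne (stackSort l) := by
  have hmono : StrictMonoOn (· - 1) {x | x ∈ l.erase 1} := fun x hx y hy hxy => by
    have := hpos x (List.mem_of_mem_erase hx)
    simp only
    omega
  rw [removeOne, removeOne, stackSort_map hmono, stackSort_erase_of_forall_le hl hpos]

theorem stackSort_iterate_removeOne (t : ℕ) {l : List ℕ} (hl : l.Nodup) (hpos : ∀ x ∈ l, 0 < x) :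
    stackSort^[t] (removeOne l) = removeOne (stackSort^[t] l) := by
  induction t with
  | zero => rfl
  | succ t ih =>
    have hperm := stackSort_iterate_perm t l
    rw [Function.iterate_succ_apply', Function.iterate_succ_apply', ih,
      stackSort_removeOne (hperm.nodup_iff.2 hl) (fun x hx => hpos x (hperm.subset hx))]

theorem removeOne_range' (n : ℕ) : removeOne (List.range' 1 (n + 1)) = List.range' 1 n := by
  rw [removeOne, List.range'_succ, List.erase_cons_head, List.map_sub_range' (by norm_num)]

theorem List.insertIdx_idxOf_erase {α : Type*} [DecidableEq α] {l : List α} {a : α} (h : a ∈ l) :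
    (l.erase a).insertIdx (l.idxOf a) a = l := by
  have hlt : l.idxOf a < l.length := List.idxOf_lt_length_iff.2 h
  conv_rhs => rw [← List.insertIdx_eraseIdx_getElem hlt]
  rw [List.getElem_idxOf hlt, List.eraseIdx_idxOf_eq_erase]

theorem insertIdx_idxOf_removeOne {l : List ℕ} (hpos : ∀ x ∈ l, 0 < x) (h1 : 1 ∈ l) :
    ((removeOne l).map (· + 1)).insertIdx (l.idxOf 1) 1 = l := by
  have hmap : (removeOne l).map (· + 1) = l.erase 1 := by
    rw [removeOne, List.map_map]
    refine List.map_congr_left (fun x hx => ?_) |>.trans (List.map_id _)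
    have := hpos x (List.mem_of_mem_erase hx)
    simp only [Function.comp_apply, id]
    omega
  rw [hmap, List.insertIdx_idxOf_erase h1]

def stackSortable (t n : ℕ) : Set (List ℕ) :=
  {π | π.Perm (List.range' 1 n) ∧ stackSort^[t] π = List.range' 1 n}

theorem stackSortable_finite (t n : ℕ) : (stackSortable t n).Finite :=
  (List.range' 1 n).permutations.finite_toSet.subset fun _ hπ => List.mem_permutations.2 hπ.1

theorem pos_of_mem_stackSortable {t n : ℕ} {π : List ℕ} (hπ : π ∈ stackSortable t n) :
    ∀ x ∈ π, 0 < x :=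
  fun _ hx => (List.mem_range'_1.1 (hπ.1.subset hx)).1

theorem one_mem_of_mem_stackSortable {t n : ℕ} {π : List ℕ} (hπ : π ∈ stackSortable t (n + 1)) :
    1 ∈ π :=
  hπ.1.mem_iff.2 (List.mem_range'_1.2 ⟨le_rfl, by omega⟩)

theorem removeOne_mem_stackSortable {t n : ℕ} {π : List ℕ} (hπ : π ∈ stackSortable t (n + 1)) :
    removeOne π ∈ stackSortable t n := by
  refine ⟨?_, ?_⟩
  · rw [← removeOne_range']
    exact (hπ.1.erase 1).map _
  · rw [stackSort_iterate_removeOne t (hπ.1.nodup_iff.2 List.nodup_range')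
      (pos_of_mem_stackSortable hπ), hπ.2, removeOne_range']

theorem card_stackSortable_succ_le (t n : ℕ) :
    Nat.card (stackSortable t (n + 1)) ≤ (n + 1) * Nat.card (stackSortable t n) := by
  let f : stackSortable t (n + 1) → Fin (n + 1) × stackSortable t n := fun π =>
    (⟨π.1.idxOf 1, by simpa [π.2.1.length_eq] using
      List.idxOf_lt_length_iff.2 (one_mem_of_mem_stackSortable π.2)⟩,
     ⟨removeOne π, removeOne_mem_stackSortable π.2⟩)
  have hf : f.Injective := fun π σ hπσ => by
    simp only [f, Prod.mk.injEq, Fin.mk.injEq, Subtype.mk.injEq] at hπσ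
    apply Subtype.ext
    rw [← insertIdx_idxOf_removeOne (pos_of_mem_stackSortable π.2)
        (one_mem_of_mem_stackSortable π.2),
      ← insertIdx_idxOf_removeOne (pos_of_mem_stackSortable σ.2)
        (one_mem_of_mem_stackSortable σ.2), hπσ.1, hπσ.2]
  have := (stackSortable_finite t n).to_subtype
  simpa using Nat.card_le_card_of_injective f hf

/-- For all `n ≥ 2`, `w_n ≤ n · w_{n-1}`. -/
theorem stmt7 (n : ℕ) (hn : 2 ≤ n) : w n ≤ n * w (n - 1) := by
  obtain ⟨k, rfl⟩ : ∃ k, n = k + 1 := ⟨n - 1, by omega⟩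
  show Nat.card (stackSortable 3 (k + 1)) ≤ (k + 1) * Nat.card (stackSortable 3 k)
  exact card_stackSortable_succ_le 3 k
end

section
/- For any nonempty permutation π ∈ S_n that is not the identity, the index c(π) with π_{c(π)} = n - tl(π) is a tail-bound descent of π. -/
/-- The `i`-th entry of `π` (1-based indexing). -/
def entry (π : List ℕ) (i : ℕ) : ℕ := π.getD (i - 1) 0

/-- The tail length `tl(π)` of `π ∈ S_n`: the largest `ℓ ∈ {0,…,n}` such that
`π_i = i` for all `i ∈ {n-ℓ+1,…,n}`. -/
def tl (n : ℕ) (π : List ℕ) : ℕ :=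
  Nat.findGreatest (fun ℓ => ∀ i ∈ Finset.Ioc (n - ℓ) n, entry π i = i) n


/-! Write `m = n - tl(π)`. The tail fixes every position above `m`, so each value above `m`
is already taken there, and by injectivity it can occur nowhere else: a value above `m`
sits at its own position, in the tail. Maximality of `tl(π)` gives `π_m ≠ m`, hence the
position `c` of the value `m` lies strictly below `m`. Then `π_{c+1}` is neither `m` nor
above `m` (that would put `c + 1 > m`), so `c` is a descent, and every hook from `(c, m)`
ends at a value above `m`, i.e. in the tail. -/

section

variable {n : ℕ} {π : List ℕ}

lemma lt_length_of_entry_ne_zero {i : ℕ} (h : entry π i ≠ 0) : i - 1 < π.length := by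
  by_contra hi
  exact h (List.getD_eq_default _ _ (not_lt.mp hi))

lemma entry_mem_Icc (hπ : π.Perm (List.range' 1 n)) {i : ℕ}
    (hi1 : 1 ≤ i) (hin : i ≤ n) : entry π i ∈ Set.Icc 1 n := by
  have hi : i - 1 < π.length := by rw [hπ.length_eq, List.length_range']; omega
  have hmem : entry π i ∈ List.range' 1 n :=
    hπ.subset (by rw [entry, List.getD_eq_getElem _ _ hi]; exact List.getElem_mem hi)
  rw [List.mem_range'_1] at hmem
  exact ⟨hmem.1, by omega⟩

lemma entry_injOn (hπ : π.Perm (List.range' 1 n)) :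
    Set.InjOn (entry π) (Set.Icc 1 n) := by
  rintro i ⟨hi1, hin⟩ j ⟨hj1, hjn⟩ hij
  have hlen : π.length = n := by rw [hπ.length_eq, List.length_range']
  have hnodup : π.Nodup := hπ.nodup_iff.mpr List.nodup_range'
  rw [entry, entry, List.getD_eq_getElem _ _ (by omega), List.getD_eq_getElem _ _ (by omega),
    hnodup.getElem_inj_iff] at hij
  omega

lemma entry_eq_self_of_sub_tl_lt {i : ℕ} (h : n - tl n π < i) (hin : i ≤ n) :
    entry π i = i := by
  have htail : ∀ i ∈ Finset.Ioc (n - tl n π) n, entry π i = i :=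
    Nat.findGreatest_spec (P := fun ℓ => ∀ i ∈ Finset.Ioc (n - ℓ) n, entry π i = i)
      (Nat.zero_le n) (fun i hi => by simp at hi)
  exact htail i (Finset.mem_Ioc.mpr ⟨h, hin⟩)

lemma entry_sub_tl_ne (h : tl n π < n) : entry π (n - tl n π) ≠ n - tl n π := by
  intro hfix
  have hnot : ¬ ∀ i ∈ Finset.Ioc (n - (tl n π + 1)) n, entry π i = i :=
    Nat.findGreatest_is_greatest (Nat.lt_succ_self _) h
  refine hnot fun i hi => ?_
  rw [Finset.mem_Ioc] at hi
  rcases (show i = n - tl n π ∨ n - tl n π < i by omega) with rfl | hlt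
  · exact hfix
  · exact entry_eq_self_of_sub_tl_lt hlt hi.2

lemma tl_lt_of_ne_range' (hlen : π.length = n) (hne : π ≠ List.range' 1 n) : tl n π < n := by
  refine lt_of_le_of_ne (Nat.findGreatest_le n) fun htl => hne ?_
  refine List.ext_getElem (by simp [hlen]) fun k hk _ => ?_
  have hkn : k < n := hlen ▸ hk
  have hfix : entry π (k + 1) = k + 1 := entry_eq_self_of_sub_tl_lt (by omega) hkn
  rw [entry, Nat.add_sub_cancel, List.getD_eq_getElem _ _ hk] at hfix
  rw [List.getElem_range', hfix]; ring

lemma entry_eq_self_of_sub_tl_lt_entry (hπ : π.Perm (List.range' 1 n))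
    {j : ℕ} (hj1 : 1 ≤ j) (hjn : j ≤ n) (h : n - tl n π < entry π j) : entry π j = j := by
  have hv := entry_mem_Icc hπ hj1 hjn
  exact entry_injOn hπ hv ⟨hj1, hjn⟩ (entry_eq_self_of_sub_tl_lt h hv.2)

end

theorem stmt12_general (n : ℕ) (π : List ℕ) (hπ : List.Perm π (List.range' 1 n))
    (hne : π ≠ List.range' 1 n)
    (c : ℕ) (hc1 : 1 ≤ c) (hcv : entry π c = n - tl n π) :
    c < n ∧ entry π (c + 1) < entry π c ∧
      ∀ j, c < j → j ≤ n → entry π c < entry π j → n - tl n π < j := by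
  have hlen : π.length = n := by rw [hπ.length_eq, List.length_range']
  have htl : tl n π < n := tl_lt_of_ne_range' hlen hne
  have hcn : c ≤ n := by
    have := lt_length_of_entry_ne_zero (i := c) (by rw [hcv]; omega)
    omega
  have hcm : c < n - tl n π := by
    rcases lt_trichotomy c (n - tl n π) with h | rfl | h
    · exact h
    · exact absurd hcv (entry_sub_tl_ne htl)
    · have := entry_eq_self_of_sub_tl_lt h hcn
      omega
  have hook : ∀ j, 1 ≤ j → j ≤ n → n - tl n π < entry π j → n - tl n π < j :=
    fun j hj1 hjn h => entry_eq_self_of_sub_tl_lt_entry hπ hj1 hjn h ▸ h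
  refine ⟨by omega, ?_, fun j hcj hjn h => hook j (by omega) hjn (hcv ▸ h)⟩
  have hnext_ne : entry π (c + 1) ≠ entry π c := fun h => by
    have := entry_injOn hπ ⟨by omega, by omega⟩ ⟨hc1, hcn⟩ h
    omega
  have hnext_not_gt : ¬ n - tl n π < entry π (c + 1) := fun h => by
    have := hook (c + 1) (by omega) (by omega) h
    omega
  omega

/-- For any `π ∈ S_n` other than the identity, the index `c = c(π)` with
`π_c = n - tl(π)` is a tail-bound descent of `π`: `c < n`, `π_c > π_{c+1}`, and
every hook with southwest endpoint `(c, π_c)` has its northeast endpoint in the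
tail. -/
theorem stmt12 (n : ℕ) (π : List ℕ) (hπ : List.Perm π (List.range' 1 n))
    (hne : π ≠ List.range' 1 n)
    (c : ℕ) (hc1 : 1 ≤ c) (hcn : c ≤ n) (hcv : entry π c = n - tl n π) :
    c < n ∧ entry π (c + 1) < entry π c ∧
      ∀ j, c < j → j ≤ n → entry π c < entry π j → n - tl n π < j :=
  stmt12_general n π hπ hne c hc1 hcv
end

section
/- For a permutation π ∈ S_n, the number of legal spaces leg(π) equals n + 1 if and only if π avoids the pattern 231. -/
/-- The open interval `(a, a+1)` is a legal space for `π ∈ S_n` if there are no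
indices `i1 < i2 < i3` with `π_{i3} ≤ a < π_{i1} < π_{i2}`. -/
def LegalSpace (n : ℕ) (π : List ℕ) (a : ℕ) : Prop :=
  ¬ ∃ i1 i2 i3 : ℕ, 1 ≤ i1 ∧ i1 < i2 ∧ i2 < i3 ∧ i3 ≤ n ∧
      entry π i3 ≤ a ∧ a < entry π i1 ∧ entry π i1 < entry π i2

/-- `leg(π)`: the number of legal spaces `(a, a+1)`, `a ∈ {0,…,n}`, of `π ∈ S_n`. -/
noncomputable def leg (n : ℕ) (π : List ℕ) : ℕ :=
  Nat.card {a : ℕ // a ≤ n ∧ LegalSpace n π a}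

theorem leg_eq_succ_iff_forall_legalSpace (n : ℕ) (π : List ℕ) :
    leg n π = n + 1 ↔ ∀ a ≤ n, LegalSpace n π a := by
  classical
  have hset : {a : ℕ | a ≤ n ∧ LegalSpace n π a} =
      ↑((Finset.range (n + 1)).filter (LegalSpace n π)) := by
    ext a
    simp
  rw [show leg n π = Set.ncard {a : ℕ | a ≤ n ∧ LegalSpace n π a} from Nat.card_coe_set_eq _,
    hset, Set.ncard_coe_finset]
  simpa only [Finset.card_range, Finset.mem_range, Nat.lt_succ_iff] using
    Finset.card_filter_eq_iff (s := Finset.range (n + 1)) (p := LegalSpace n π)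

theorem not_legalSpace_iff {n : ℕ} {π : List ℕ} (hlen : π.length = n) (a : ℕ) :
    ¬ LegalSpace n π a ↔ ∃ i1 i2 i3 : ℕ, i1 < i2 ∧ i2 < i3 ∧ i3 < π.length ∧
      π.getD i3 0 ≤ a ∧ a < π.getD i1 0 ∧ π.getD i1 0 < π.getD i2 0 := by
  rw [LegalSpace, not_not]
  constructor
  · rintro ⟨i1, i2, i3, h1, h12, h23, h3, hv3, hv1, hv12⟩
    exact ⟨i1 - 1, i2 - 1, i3 - 1, by omega, by omega, by omega, hv3, hv1, hv12⟩
  · rintro ⟨i1, i2, i3, h12, h23, h3, hv3, hv1, hv12⟩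
    exact ⟨i1 + 1, i2 + 1, i3 + 1, by omega, by omega, by omega, by omega, hv3, hv1, hv12⟩

/-- An occurrence of 231 whose `1` has value `c` makes `(c, c+1)` illegal. -/
theorem contains231_iff_exists_not_legalSpace {n : ℕ} {π : List ℕ} (hlen : π.length = n)
    (hle : ∀ x ∈ π, x ≤ n) : Contains231 π ↔ ∃ a ≤ n, ¬ LegalSpace n π a := by
  simp only [not_legalSpace_iff hlen]
  constructor
  · rintro ⟨i1, i2, i3, h12, h23, h3, hv31, hv12⟩
    have hv3 : π.getD i3 0 ≤ n := by
      rw [List.getD_eq_getElem π 0 h3]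
      exact hle _ (List.getElem_mem h3)
    exact ⟨_, hv3, i1, i2, i3, h12, h23, h3, le_rfl, hv31, hv12⟩
  · rintro ⟨a, -, i1, i2, i3, h12, h23, h3, hv3, hv1, hv12⟩
    exact ⟨i1, i2, i3, h12, h23, h3, lt_of_le_of_lt hv3 hv1, hv12⟩

/-- For `π ∈ S_n`, `leg(π) = n + 1` iff `π` avoids the pattern 231. -/
theorem stmt13 (n : ℕ) (π : List ℕ) (hπ : List.Perm π (List.range' 1 n)) :
    leg n π = n + 1 ↔ ¬ Contains231 π := by
  have hlen : π.length = n := by simpa using hπ.length_eq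
  have hle : ∀ x ∈ π, x ≤ n := fun x hx => by
    have := List.mem_range'_1.mp (hπ.mem_iff.mp hx)
    omega
  rw [leg_eq_succ_iff_forall_legalSpace, contains231_iff_exists_not_legalSpace hlen hle]
  simp only [not_exists, not_and, not_not]
end

section
/- For the unique solution Q(t,x,a) = Σ_{n≥1} t^n Q_n(x,a) of the functional equation in Theorem 1.1, each Q_n(x,a) is a polynomial in x and a of degree at most n + 1 in each variable. -/
/-- The coefficient ring `ℤ[x][a]` (outer variable `a`, inner variable `x`). -/
abbrev R2 : Type := Polynomial (Polynomial ℤ)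

/-- Setting `a := 0`, as a ring endomorphism of `ℤ[x][a]`. -/
noncomputable def evalA : R2 →+* R2 :=
  Polynomial.C.comp (Polynomial.evalRingHom 0)

/-- Setting `x := 0`, as a ring endomorphism of `ℤ[x][a]`. -/
noncomputable def evalX : R2 →+* R2 :=
  Polynomial.mapRingHom (Polynomial.C.comp (Polynomial.evalRingHom 0))

/-- The elements `a` and `x` of `ℤ[x][a]`. -/
noncomputable def aR : R2 := Polynomial.X
noncomputable def xR : R2 := Polynomial.C Polynomial.X

/-! The bound is proved by strong induction on `n`, tracking both degrees at once: degrees are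
subadditive under products, dividing by `a` (resp. `x`) lowers the degree in `a` (resp. `x`)
by one, and setting a variable to zero raises no degree. In the quadratic term the two factors
have bidegrees at most `(j + 1, j + 1)` and `(n - j, n - j)`, and the division by `x` absorbs the
extra factor `1 + x`. -/

open Polynomial

variable {R : Type*}

/-- `b` bounds the degree in the outer variable (`a` in `R2`), `c` that in the inner one (`x`). -/
def BidegreeLE [Semiring R] (b c : ℕ) (p : R[X][X]) : Prop :=
  p.natDegree ≤ b ∧ ∀ k, (p.coeff k).natDegree ≤ c

namespace BidegreeLE

section Semiring

variable [Semiring R] {b c b' c' : ℕ} {p q : R[X][X]}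

lemma zero : BidegreeLE b c (0 : R[X][X]) :=
  ⟨by simp, fun k => by simp⟩

lemma one : BidegreeLE 0 0 (1 : R[X][X]) := by
  refine ⟨by simp, fun k => ?_⟩
  rcases eq_or_ne k 0 with rfl | hk <;> simp [coeff_one, *]

lemma X : BidegreeLE 1 0 (X : R[X][X]) := by
  refine ⟨natDegree_X_le, fun k => ?_⟩
  rw [coeff_X]
  split <;> simp

lemma C_X : BidegreeLE 0 1 (C Polynomial.X : R[X][X]) := by
  refine ⟨by simp, fun k => ?_⟩
  rw [coeff_C]
  split
  · exact natDegree_X_le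
  · simp

lemma mono (hb : b ≤ b') (hc : c ≤ c') (h : BidegreeLE b c p) : BidegreeLE b' c' p :=
  ⟨h.1.trans hb, fun k => (h.2 k).trans hc⟩

lemma add (hp : BidegreeLE b c p) (hq : BidegreeLE b c q) : BidegreeLE b c (p + q) := by
  refine ⟨(natDegree_add_le p q).trans (max_le hp.1 hq.1), fun k => ?_⟩
  rw [coeff_add]
  exact (natDegree_add_le _ _).trans (max_le (hp.2 k) (hq.2 k))

lemma mul (hp : BidegreeLE b c p) (hq : BidegreeLE b' c' q) :
    BidegreeLE (b + b') (c + c') (p * q) := by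
  refine ⟨natDegree_mul_le.trans (add_le_add hp.1 hq.1), fun k => ?_⟩
  rw [coeff_mul]
  exact natDegree_sum_le_of_forall_le _ _ fun i _ =>
    natDegree_mul_le.trans (add_le_add (hp.2 _) (hq.2 _))

lemma pow (hp : BidegreeLE b c p) (n : ℕ) : BidegreeLE (n * b) (n * c) (p ^ n) := by
  induction n with
  | zero => simpa using one
  | succ n ih => simpa [pow_succ, add_mul] using ih.mul hp

lemma sum {ι : Type*} {s : Finset ι} {f : ι → R[X][X]}
    (h : ∀ i ∈ s, BidegreeLE b c (f i)) :
    BidegreeLE b c (∑ i ∈ s, f i) := by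
  refine ⟨natDegree_sum_le_of_forall_le _ _ fun i hi => (h i hi).1, fun k => ?_⟩
  rw [finsetSum_coeff]
  exact natDegree_sum_le_of_forall_le _ _ fun i hi => (h i hi).2 k

lemma C_eval_zero (h : BidegreeLE b c p) : BidegreeLE b c (C (p.eval 0)) := by
  refine ⟨by simp, fun k => ?_⟩
  rw [coeff_C]
  split
  · simpa [coeff_zero_eq_eval_zero] using h.2 0
  · simp

lemma of_X_mul [Nontrivial R] (h : BidegreeLE b c (Polynomial.X * p)) :
    BidegreeLE (b - 1) c p := by
  refine ⟨?_, fun k => by simpa [coeff_X_mul] using h.2 (k + 1)⟩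
  rcases eq_or_ne p 0 with rfl | hp
  · simp
  · have := h.1
    rw [natDegree_X_mul hp] at this
    omega

lemma of_C_X_mul [Nontrivial R] (h : BidegreeLE b c (C Polynomial.X * p)) :
    BidegreeLE b (c - 1) p := by
  have hcoeff (k : ℕ) : (C Polynomial.X * p).coeff k = Polynomial.X * p.coeff k := coeff_C_mul p
  refine ⟨natDegree_le_iff_coeff_eq_zero.2 fun N hN => ?_, fun k => ?_⟩
  · refine isRegular_X.left (?_ : Polynomial.X * p.coeff N = Polynomial.X * 0)
    rw [mul_zero, ← hcoeff]
    exact natDegree_le_iff_coeff_eq_zero.1 h.1 N hN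
  · rcases eq_or_ne (p.coeff k) 0 with hk | hk
    · simp [hk]
    · have := h.2 k
      rw [hcoeff, natDegree_X_mul hk] at this
      omega

end Semiring

lemma map_C_eval_zero [CommSemiring R] {b c : ℕ} {p : R[X][X]} (h : BidegreeLE b c p) :
    BidegreeLE b c (p.map (C.comp (evalRingHom 0))) :=
  ⟨natDegree_map_le.trans h.1, fun k => by simp [coeff_map]⟩

section Ring

variable [Ring R] {b c : ℕ} {p q : R[X][X]}

lemma neg (hp : BidegreeLE b c p) : BidegreeLE b c (-p) :=
  ⟨by simpa using hp.1, fun k => by simpa using hp.2 k⟩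

lemma sub (hp : BidegreeLE b c p) (hq : BidegreeLE b c q) : BidegreeLE b c (p - q) := by
  simpa [sub_eq_add_neg] using hp.add hq.neg

end Ring

end BidegreeLE

section Recurrence

open BidegreeLE

variable {b c : ℕ} {p : R2}

lemma BidegreeLE.sub_evalA (h : BidegreeLE b c p) : BidegreeLE b c (p - evalA p) :=
  h.sub h.C_eval_zero

lemma BidegreeLE.sub_evalX (h : BidegreeLE b c p) : BidegreeLE b c (p - evalX p) :=
  h.sub h.map_C_eval_zero

lemma bidegreeLE_one_add_xR : BidegreeLE 0 1 (1 + xR) :=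
  (one.mono le_rfl zero_le_one).add C_X

lemma bidegreeLE_one_add_aR : BidegreeLE 1 0 (1 + aR) :=
  (one.mono zero_le_one le_rfl).add X

lemma bidegreeLE_recurrence {Q : ℕ → R2} {n : ℕ} (hn : 2 ≤ n)
    (ih : ∀ j < n, BidegreeLE (j + 1) (j + 1) (Q j)) {D S : R2}
    (hD : aR * D = Q (n - 1) - evalA (Q (n - 1)))
    (hS : xR * S = ∑ j ∈ Finset.Icc 1 (n - 2),
      (Q j - evalA (Q j)) * (Q (n - j - 1) - evalX (Q (n - j - 1)))) :
    BidegreeLE (n + 1) (n + 1)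
      ((1 + xR) * (1 + aR) ^ 2 * D + (1 + xR) * aR * Q (n - 1) + (1 + xR) * S) := by
  have hQ : BidegreeLE n n (Q (n - 1)) := by
    simpa [Nat.sub_add_cancel (by omega : 1 ≤ n)] using ih (n - 1) (by omega)
  have hDdeg : BidegreeLE (n - 1) n D := of_X_mul (hD ▸ hQ.sub_evalA)
  have hsum : BidegreeLE (n + 1) (n + 1) (xR * S) := by
    refine hS ▸ sum fun j hj => ?_
    obtain ⟨hj1, hjn⟩ := Finset.mem_Icc.1 hj
    exact ((ih j (by omega)).sub_evalA.mul (ih (n - j - 1) (by omega)).sub_evalX).mono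
      (by omega) (by omega)
  have hSdeg : BidegreeLE (n + 1) n S := (of_C_X_mul hsum).mono le_rfl (by omega)
  have h₁ := (bidegreeLE_one_add_xR.mul (bidegreeLE_one_add_aR.pow 2)).mul hDdeg
  have h₂ := (bidegreeLE_one_add_xR.mul X).mul hQ
  have h₃ := bidegreeLE_one_add_xR.mul hSdeg
  refine ((h₁.mono ?_ ?_).add (h₂.mono ?_ ?_)).add (h₃.mono ?_ ?_) <;> omega

end Recurrence

/-- If `(Q_n)` satisfies `Q_0 = 0`, `Q_1 = (x+1)²(a+1)²` and the recurrence
`Q_n = (1+x)(1+a)²(Q_{n−1} − Q_{n−1}(x,0))/a + (1+x)·a·Q_{n−1}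
      + ((1+x)/x)·Σ_{j=1}^{n−2}(Q_j − Q_j(x,0))(Q_{n−j−1} − Q_{n−j−1}(0,a))`
(the exact quotients being expressed by witnesses `D` and `S`), then each `Q_n`
has degree at most `n+1` in each of the variables `a` and `x`. -/
theorem stmt15 (Q : ℕ → R2)
    (h0 : Q 0 = 0)
    (h1 : Q 1 = (xR + 1) ^ 2 * (aR + 1) ^ 2)
    (hrec : ∀ n, 2 ≤ n → ∃ D S : R2,
        aR * D = Q (n - 1) - evalA (Q (n - 1)) ∧
        xR * S = ∑ j ∈ Finset.Icc 1 (n - 2),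
            (Q j - evalA (Q j)) * (Q (n - j - 1) - evalX (Q (n - j - 1))) ∧
        Q n = (1 + xR) * (1 + aR) ^ 2 * D + (1 + xR) * aR * Q (n - 1)
              + (1 + xR) * S) :
    ∀ n, (Q n).natDegree ≤ n + 1 ∧ ∀ k, ((Q n).coeff k).natDegree ≤ n + 1 := by
  intro n
  induction n using Nat.strong_induction_on with
  | _ n ih =>
    match n with
    | 0 => exact h0 ▸ BidegreeLE.zero
    | 1 =>
      rw [h1, add_comm xR, add_comm aR]
      exact ((bidegreeLE_one_add_xR.pow 2).mul (bidegreeLE_one_add_aR.pow 2)).mono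
        (by omega) (by omega)
    | n + 2 =>
      obtain ⟨D, S, hD, hS, hQ⟩ := hrec (n + 2) (by omega)
      exact hQ ▸ bidegreeLE_recurrence (by omega) ih hD hS
end
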